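/- arXiv:2006.00368 — 11 statements merged into one kernel-verified Lean document; each statement's English description precedes it below -/
import Mathlib

section
/- Let P be an n×c plurality matrix and let B be an n×c beta(k) matrix such that for all voters i and candidates j, B i j = k if and only if P i j = 1. If k > n, then every beta(k) winner (candidate whose column sum in B is maximal) is a plurality winner (candidate whose column sum in P is maximal). -/
/-- The score of candidate `j` under vote matrix `Z`: the sum of column `j`. -/
def score {n c : ℕ} (Z : Fin n → Fin c → ℝ) (j : Fin c) : ℝ := ∑ i, Z i j

/-- Candidate `j` is a winner for `Z` if its score is maximal among all candidates. -/
def IsWinner {n c : ℕ} (Z : Fin n → Fin c → ℝ) (j : Fin c) : Prop :=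
  ∀ j', score Z j' ≤ score Z j

/-- A plurality matrix: all entries in {0,1}, exactly one `1` in each row. -/
def IsPluralityMatrix {n c : ℕ} (P : Fin n → Fin c → ℝ) : Prop :=
  (∀ i j, P i j = 0 ∨ P i j = 1) ∧ ∀ i, ∃! j, P i j = 1

/-- An approval matrix: all entries in {0,1}, at least one `1` in each row. -/
def IsApprovalMatrix {n c : ℕ} (A : Fin n → Fin c → ℝ) : Prop :=
  (∀ i j, A i j = 0 ∨ A i j = 1) ∧ ∀ i, ∃ j, A i j = 1

/-- A beta(k) matrix: in each row, one designated entry equals `k`,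
all other entries of that row lie in {0,1}. -/
def IsBetaMatrix {n c : ℕ} (k : ℝ) (B : Fin n → Fin c → ℝ) : Prop :=
  ∀ i, ∃ j, B i j = k ∧ ∀ j' ≠ j, B i j' = 0 ∨ B i j' = 1

/-- if `B i j = k ↔ P i j = 1` and `k > n`, every beta(k) winner is a
plurality winner. -/
theorem stmt_0 {n c : ℕ} (hc : 1 ≤ c) (k : ℝ) (hk : 1 ≤ k)
    (P B : Fin n → Fin c → ℝ)
    (hP : IsPluralityMatrix P) (hB : IsBetaMatrix k B)
    (hPB : ∀ i j, B i j = k ↔ P i j = 1)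
    (hkn : (n : ℝ) < k) :
    ∀ w : Fin c, IsWinner B w → IsWinner P w := by
  -- Each entry of B is either k (when P = 1) or in {0,1} (when P = 0).
  have hentry : ∀ i j, (P i j = 1 ∧ B i j = k) ∨
      (P i j = 0 ∧ (B i j = 0 ∨ B i j = 1)) := by
    intro i j
    rcases hP.1 i j with h0 | h1
    · right
      refine ⟨h0, ?_⟩
      obtain ⟨j0, hj0, hoth⟩ := hB i
      rcases eq_or_ne j j0 with rfl | hne
      · exact absurd (h0 ▸ ((hPB i j).mp hj0)) (by norm_num)
      · exact hoth j hne
    · left; exact ⟨h1, (hPB i j).mpr h1⟩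
  have hcard : ∀ j, score P j =
      ((Finset.univ.filter (fun i => P i j = 1)).card : ℝ) := by
    intro j
    rw [score, Finset.card_filter]
    push_cast
    refine Finset.sum_congr rfl fun i _ => ?_
    rcases hP.1 i j with h | h <;> simp [h]
  intro w hw j'
  by_contra hlt
  push_neg at hlt
  -- integrality: score P j' ≥ score P w + 1
  have hstep : score P w + 1 ≤ score P j' := by
    rw [hcard w, hcard j'] at *
    have := hlt
    exact_mod_cast Nat.succ_le_of_lt (by exact_mod_cast this)
  -- lower bound on score B j'
  have hlow : k * score P j' ≤ score B j' := by
    rw [score, score, Finset.mul_sum]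
    refine Finset.sum_le_sum fun i _ => ?_
    rcases hentry i j' with ⟨h1, hB1⟩ | ⟨h0, hB01⟩
    · rw [h1, hB1, mul_one]
    · rw [h0, mul_zero]
      rcases hB01 with h | h <;> rw [h] <;> norm_num
  -- upper bound on score B w
  have hup : score B w ≤ k * score P w + n := by
    rw [score, score, Finset.mul_sum]
    have : (n : ℝ) = ∑ _i : Fin n, (1 : ℝ) := by simp
    rw [this, ← Finset.sum_add_distrib]
    refine Finset.sum_le_sum fun i _ => ?_
    rcases hentry i w with ⟨h1, hB1⟩ | ⟨h0, hB01⟩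
    · rw [h1, hB1, mul_one]; linarith
    · rw [h0, mul_zero]
      rcases hB01 with h | h <;> rw [h] <;> norm_num
  have hk0 : 0 < k := lt_of_lt_of_le one_pos hk
  have := hw j'
  nlinarith [mul_le_mul_of_nonneg_left hstep (le_of_lt hk0)]
end

section
/- Let P be an n×c plurality matrix and let B be an n×c beta(k) matrix such that for all voters i and candidates j, B i j = k if and only if P i j = 1. If k > n and there is exactly one plurality winner w (i.e., w is the unique candidate whose column sum in P is maximal), then a candidate is a beta(k) winner if and only if it equals w; that is, the set of beta(k) winners equals {w}. -/
/-- if `B i j = k ↔ P i j = 1`, `k > n` and there is a unique plurality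
winner `w`, then the beta(k) winners are exactly `{w}`. -/
theorem stmt_1 {n c : ℕ} (hc : 1 ≤ c) (k : ℝ) (hk : 1 ≤ k)
    (P B : Fin n → Fin c → ℝ)
    (hP : IsPluralityMatrix P) (hB : IsBetaMatrix k B)
    (hPB : ∀ i j, B i j = k ↔ P i j = 1)
    (hkn : (n : ℝ) < k)
    (w : Fin c) (hw : IsWinner P w) (huniq : ∀ j, IsWinner P j → j = w) :
    ∀ j : Fin c, IsWinner B j ↔ j = w := by
  -- residual bounds
  have hr : ∀ (i : Fin n) (j : Fin c),
      0 ≤ B i j - k * P i j ∧ B i j - k * P i j ≤ 1 := by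
    intro i j
    rcases hP.1 i j with h0 | h1
    · -- P i j = 0, so B i j ∈ {0,1}
      obtain ⟨j0, hj0k, hrest⟩ := hB i
      have hPj0 : P i j0 = 1 := (hPB i j0).1 hj0k
      have hne : j ≠ j0 := by
        intro h; rw [h, hPj0] at h0; norm_num at h0
      rcases hrest j hne with hb | hb <;> rw [h0, hb] <;> norm_num
    · have hb : B i j = k := (hPB i j).2 h1
      rw [h1, hb]; constructor <;> linarith
  -- score P j is a natural number
  have hnat : ∀ j : Fin c, ∃ m : ℕ, score P j = (m : ℝ) := by
    intro j
    refine ⟨(Finset.univ.filter (fun i => P i j = 1)).card, ?_⟩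
    rw [score, ← Finset.sum_filter_add_sum_filter_not Finset.univ (fun i => P i j = 1)]
    have h1 : ∑ i ∈ Finset.univ.filter (fun i => P i j = 1), P i j
        = ((Finset.univ.filter (fun i => P i j = 1)).card : ℝ) := by
      rw [Finset.sum_congr rfl (fun i hi => (Finset.mem_filter.1 hi).2)]
      simp
    have h2 : ∑ i ∈ Finset.univ.filter (fun i => ¬ P i j = 1), P i j = 0 := by
      apply Finset.sum_eq_zero
      intro i hi
      rcases hP.1 i j with h | h
      · exact h
      · exact absurd h (Finset.mem_filter.1 hi).2
    rw [h1, h2, add_zero]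
  -- score B decomposition
  have hdec : ∀ j : Fin c, score B j = k * score P j + ∑ i, (B i j - k * P i j) := by
    intro j
    rw [score, score, Finset.mul_sum, ← Finset.sum_add_distrib]
    apply Finset.sum_congr rfl
    intro i _
    ring
  -- residual sum bounds
  have hR0 : ∀ j : Fin c, 0 ≤ ∑ i, (B i j - k * P i j) := fun j =>
    Finset.sum_nonneg (fun i _ => (hr i j).1)
  have hRn : ∀ j : Fin c, ∑ i, (B i j - k * P i j) ≤ (n : ℝ) := by
    intro j
    calc ∑ i, (B i j - k * P i j) ≤ ∑ _i : Fin n, (1 : ℝ) :=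
          Finset.sum_le_sum (fun i _ => (hr i j).2)
      _ = (n : ℝ) := by simp
  -- strict comparison for j ≠ w
  have hstrict : ∀ j : Fin c, j ≠ w → score B j < score B w := by
    intro j hjw
    have hjnw : ¬ IsWinner P j := fun h => hjw (huniq j h)
    have hlt : score P j < score P w := by
      by_contra h
      push_neg at h
      exact hjnw (fun j' => le_trans (hw j') h)
    obtain ⟨mj, hmj⟩ := hnat j
    obtain ⟨mw, hmw⟩ := hnat w
    have : (mj : ℝ) < (mw : ℝ) := by rw [← hmj, ← hmw]; exact hlt
    have hmlt : mj < mw := by exact_mod_cast this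
    have hone : score P j + 1 ≤ score P w := by
      rw [hmj, hmw]
      exact_mod_cast Nat.succ_le_of_lt hmlt
    have hk0 : (0 : ℝ) ≤ k := by linarith
    rw [hdec j, hdec w]
    have h1 : ∑ i, (B i j - k * P i j) ≤ (n : ℝ) := hRn j
    have h2 : 0 ≤ ∑ i, (B i w - k * P i w) := hR0 w
    nlinarith [hRn j, hR0 w]
  intro j
  constructor
  · intro hwin
    by_contra hjw
    exact absurd (hwin w) (not_le.2 (hstrict j hjw))
  · rintro rfl
    intro j'
    rcases eq_or_ne j' j with rfl | h
    · exact le_refl _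
    · exact le_of_lt (hstrict j' h)
end

section
/- There exist n ≥ 1, c ≥ 1, a real number k > n, an n×c plurality matrix P, and an n×c beta(k) matrix B with B i j = k if and only if P i j = 1 for all i, j, such that some plurality winner is not a beta(k) winner. (For instance n = c = 2 with B = [[k,1],[0,k]] and P the identity matrix.) -/
/-- there exist `n ≥ 1`, `c ≥ 1`, `k > n`, a plurality matrix `P` and a
beta(k) matrix `B` with `B i j = k ↔ P i j = 1`, such that some plurality winner is not a
beta(k) winner. -/
theorem stmt_2 :
    ∃ (n c : ℕ), 1 ≤ n ∧ 1 ≤ c ∧ ∃ (k : ℝ), 1 ≤ k ∧ (n : ℝ) < k ∧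
      ∃ (P B : Fin n → Fin c → ℝ),
        IsPluralityMatrix P ∧ IsBetaMatrix k B ∧
        (∀ i j, B i j = k ↔ P i j = 1) ∧
        ∃ w : Fin c, IsWinner P w ∧ ¬ IsWinner B w := by

  refine ⟨2, 2, by norm_num, by norm_num, 3, by norm_num, by norm_num,
    ![![1,0],![0,1]], ![![3,1],![0,3]], ?_, ?_, ?_, 0, ?_, ?_⟩
  · constructor
    · intro i j; fin_cases i <;> fin_cases j <;> norm_num
    · intro i; fin_cases i
      · exact ⟨0, by norm_num, by intro j h; fin_cases j <;> simp_all⟩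
      · exact ⟨1, by norm_num, by intro j h; fin_cases j <;> simp_all⟩
  · intro i; fin_cases i
    · exact ⟨0, by norm_num, by intro j h; fin_cases j <;> simp_all⟩
    · exact ⟨1, by norm_num, by intro j h; fin_cases j <;> simp_all⟩
  · intro i j; fin_cases i <;> fin_cases j <;> norm_num
  · intro j; fin_cases j <;> simp [score, Fin.sum_univ_two]
  · intro h
    have := h 1
    simp [score, Fin.sum_univ_two] at this
    linarith
end

section
/- Suppose c = 2, P is an n×2 plurality matrix, A is an n×2 approval matrix with A i j = 1 whenever P i j = 1, and for k ≥ 1 set B_k := (k−1)·P + A. Write p_j and a_j for the column sums of P and A at candidate j, and suppose p_1 > p_2 and a_2 ≥ a_1. Let t := 1 + (a_2 − a_1)/(p_1 − p_2). Then: (i) if k > t, candidate 1 is the unique beta(k) winner for B_k; (ii) if 1 ≤ k < t, candidate 2 is the unique beta(k) winner for B_k; (iii) if k = t, candidates 1 and 2 are both beta(k) winners for B_k. -/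
/-- two candidates, `p₁ > p₂` and `a₂ ≥ a₁`, `t = 1 + (a₂-a₁)/(p₁-p₂)`.
For `k > t` candidate `0` is the unique beta(k) winner; for `1 ≤ k < t` candidate `1` is
the unique beta(k) winner; for `k = t` both are beta(k) winners. -/
theorem stmt_4 {n : ℕ} (P A : Fin n → Fin 2 → ℝ)
    (hP : IsPluralityMatrix P) (hA : IsApprovalMatrix A)
    (hPA : ∀ i j, P i j = 1 → A i j = 1)
    (B : ℝ → Fin n → Fin 2 → ℝ)
    (hB : ∀ k i j, B k i j = (k - 1) * P i j + A i j)
    (hp : score P 1 < score P 0) (ha : score A 0 ≤ score A 1)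
    (t : ℝ) (ht : t = 1 + (score A 1 - score A 0) / (score P 0 - score P 1)) :
    (∀ k : ℝ, 1 ≤ k → t < k →
      IsWinner (B k) 0 ∧ ∀ j, IsWinner (B k) j → j = 0) ∧
    (∀ k : ℝ, 1 ≤ k → k < t →
      IsWinner (B k) 1 ∧ ∀ j, IsWinner (B k) j → j = 1) ∧
    (∀ k : ℝ, 1 ≤ k → k = t →
      IsWinner (B k) 0 ∧ IsWinner (B k) 1) := by
  have hscore : ∀ k j, score (B k) j = (k - 1) * score P j + score A j := by
    intro k j
    simp only [score, hB, Finset.sum_add_distrib, Finset.mul_sum]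
  have hd : 0 < score P 0 - score P 1 := by linarith
  have key : ∀ k : ℝ, score (B k) 0 - score (B k) 1
      = (k - t) * (score P 0 - score P 1) := by
    intro k
    rw [hscore, hscore, ht]
    field_simp
    ring
  refine ⟨?_, ?_, ?_⟩
  · intro k _ hk
    have h01 : score (B k) 1 < score (B k) 0 := by nlinarith [key k]
    constructor
    · intro j'; fin_cases j' <;> simp <;> linarith
    · intro j hj; fin_cases j
      · rfl
      · exfalso; have := hj 0; simp at this; linarith
  · intro k _ hk
    have h01 : score (B k) 0 < score (B k) 1 := by nlinarith [key k]
    constructor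
    · intro j'; fin_cases j' <;> simp <;> linarith
    · intro j hj; fin_cases j
      · exfalso; have := hj 1; simp at this; linarith
      · rfl
  · intro k _ hk
    subst hk
    have h01 : score (B k) 0 = score (B k) 1 := by
      have := key k; simp at this; linarith
    constructor <;> intro j' <;> fin_cases j' <;> simp <;> linarith
end

section
/- Let P be an n×c plurality matrix and A an n×c approval matrix with A i j = 1 whenever P i j = 1, and for k ≥ 1 set B_k := (k−1)·P + A. Call a candidate y a potential winner if there exists k ≥ 1 such that y is a winner for B_k. If i and j are potential winners with p_i < p_j (plurality column sums) and a_i ≠ a_j (approval column sums), then a_j < a_i. Symmetrically, if a_i < a_j and p_i ≠ p_j, then p_j < p_i. -/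
/-- for potential beta(k) winners `i`, `j`: if `p_i < p_j` and `a_i ≠ a_j`
then `a_j < a_i`; symmetrically if `a_i < a_j` and `p_i ≠ p_j` then `p_j < p_i`. -/
theorem stmt_6 {n c : ℕ} (P A : Fin n → Fin c → ℝ)
    (hP : IsPluralityMatrix P) (hA : IsApprovalMatrix A)
    (hPA : ∀ i j, P i j = 1 → A i j = 1)
    (B : ℝ → Fin n → Fin c → ℝ)
    (hB : ∀ k i j, B k i j = (k - 1) * P i j + A i j)
    (i j : Fin c)
    (hi : ∃ k : ℝ, 1 ≤ k ∧ IsWinner (B k) i)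
    (hj : ∃ k : ℝ, 1 ≤ k ∧ IsWinner (B k) j) :
    (score P i < score P j → score A i ≠ score A j → score A j < score A i) ∧
    (score A i < score A j → score P i ≠ score P j → score P j < score P i) := by
  obtain ⟨k, hk, hw⟩ := hi
  have hs : ∀ x, score (B k) x = (k - 1) * score P x + score A x := by
    intro x
    simp only [score, hB, Finset.sum_add_distrib, Finset.mul_sum]
  have h := hw j
  rw [hs, hs] at h
  constructor
  · intro hp hne
    rcases lt_or_eq_of_le (by nlinarith : score A j ≤ score A i) with h' | h'
    · exact h'
    · exact absurd h'.symm hne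
  · intro ha hne
    rcases lt_or_eq_of_le (by nlinarith : score P j ≤ score P i) with h' | h'
    · exact h'
    · exact absurd h'.symm hne
end

section
/- Let P be an n×c plurality matrix and A an n×c approval matrix with A i j = 1 whenever P i j = 1, and for k ≥ 1 set B_k := (k−1)·P + A. Suppose candidates i, j, l satisfy p_i < p_j < p_l (plurality column sums), and suppose there exists k ≥ 1 such that the beta(k) score of j under B_k is at least the beta(k) scores of both i and l. Then (a_i − a_j)·(p_l − p_j) ≤ (a_j − a_l)·(p_j − p_i), where a denotes approval column sums; equivalently (a_i − a_j)/(p_j − p_i) ≤ (a_j − a_l)/(p_l − p_j). -/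
/-- if `p_i < p_j < p_l` and for some `k ≥ 1` the beta(k) score of `j` is at
least those of `i` and `l`, then `(a_i - a_j)(p_l - p_j) ≤ (a_j - a_l)(p_j - p_i)`. -/
theorem stmt_7 {n c : ℕ} (P A : Fin n → Fin c → ℝ)
    (hP : IsPluralityMatrix P) (hA : IsApprovalMatrix A)
    (hPA : ∀ i j, P i j = 1 → A i j = 1)
    (B : ℝ → Fin n → Fin c → ℝ)
    (hB : ∀ k i j, B k i j = (k - 1) * P i j + A i j)
    (i j l : Fin c)
    (hij : score P i < score P j) (hjl : score P j < score P l)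
    (hk : ∃ k : ℝ, 1 ≤ k ∧
      score (B k) i ≤ score (B k) j ∧ score (B k) l ≤ score (B k) j) :
    (score A i - score A j) * (score P l - score P j) ≤
      (score A j - score A l) * (score P j - score P i) := by
  obtain ⟨k, hk1, hkij, hklj⟩ := hk
  have hsc : ∀ x, score (B k) x = (k - 1) * score P x + score A x := by
    intro x
    simp only [score, hB, Finset.sum_add_distrib, Finset.mul_sum]
  rw [hsc, hsc] at hkij hklj
  nlinarith [mul_nonneg (mul_nonneg (sub_nonneg.2 hk1) (sub_nonneg.2 hij.le)) (sub_nonneg.2 hjl.le)]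
end

section
/- Let P be an n×c plurality matrix and A an n×c approval matrix with A i j = 1 whenever P i j = 1, and for k ≥ 1 set B_k := (k−1)·P + A. Call a candidate y a potential winner if there exists k ≥ 1 such that y is a winner for B_k, and let Y be the set of potential winners. Suppose the potential winners have pairwise distinct plurality column sums and are enumerated as y_1, …, y_r (a bijection of {1,…,r} with Y) with p_{y_1} < p_{y_2} < … < p_{y_r}. Fix k ≥ 1 and an index w with 1 ≤ w ≤ r, and suppose that k ≥ 1 + (a_{y_{w−1}} − a_{y_w})/(p_{y_w} − p_{y_{w−1}}) whenever w > 1, and k ≤ 1 + (a_{y_w} − a_{y_{w+1}})/(p_{y_{w+1}} − p_{y_w}) whenever w < r. Then y_w is a winner for B_k. -/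
lemma key_low (pm pw1 pw am aw1 aw k1 k : ℝ)
    (h1 : (k1 - 1) * pm + am ≤ (k1 - 1) * pw1 + aw1)
    (h2 : (k1 - 1) * pw + aw ≤ (k1 - 1) * pw1 + aw1)
    (h3 : aw1 - aw ≤ (k - 1) * (pw - pw1))
    (hp1 : pm ≤ pw1) (hp2 : pw1 < pw) :
    (k - 1) * pm + am ≤ (k - 1) * pw + aw := by
  have hk1k : k1 ≤ k := by nlinarith
  nlinarith [mul_nonneg (sub_nonneg.2 hk1k) (sub_nonneg.2 hp1)]

lemma key_high (pw pw1 pm aw aw1 am k1 k : ℝ)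
    (h1 : (k1 - 1) * pm + am ≤ (k1 - 1) * pw1 + aw1)
    (h2 : (k1 - 1) * pw + aw ≤ (k1 - 1) * pw1 + aw1)
    (h3 : (k - 1) * (pw1 - pw) ≤ aw - aw1)
    (hp1 : pw1 ≤ pm) (hp2 : pw < pw1) :
    (k - 1) * pm + am ≤ (k - 1) * pw + aw := by
  have hk1k : k ≤ k1 := by nlinarith
  nlinarith [mul_nonneg (sub_nonneg.2 hk1k) (sub_nonneg.2 hp1)]

/-- enumerate the potential beta(k) winners as `y 0, …, y (r-1)` in strictly
increasing order of plurality score. If `k ≥ 1` satisfies the lower-bound inequality at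
`w` (when `w > 0`) and the upper-bound inequality at `w` (when `w < r - 1`), then `y w`
is a winner for `B_k`. -/
theorem stmt_9 {n c r : ℕ} (P A : Fin n → Fin c → ℝ)
    (hP : IsPluralityMatrix P) (hA : IsApprovalMatrix A)
    (hPA : ∀ i j, P i j = 1 → A i j = 1)
    (B : ℝ → Fin n → Fin c → ℝ)
    (hB : ∀ k i j, B k i j = (k - 1) * P i j + A i j)
    (y : Fin r → Fin c)
    (hy : ∀ m : Fin r, ∃ k : ℝ, 1 ≤ k ∧ IsWinner (B k) (y m))
    (hinj : Function.Injective y)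
    (hsurj : ∀ x : Fin c, (∃ k : ℝ, 1 ≤ k ∧ IsWinner (B k) x) → ∃ m : Fin r, y m = x)
    (hmono : ∀ m m' : Fin r, m < m' → score P (y m) < score P (y m'))
    (k : ℝ) (hk : 1 ≤ k) (w : Fin r)
    (hlow : ∀ h : 0 < w.val,
      1 + (score A (y ⟨w.val - 1, by omega⟩) - score A (y w)) /
          (score P (y w) - score P (y ⟨w.val - 1, by omega⟩)) ≤ k)
    (hhigh : ∀ h : w.val + 1 < r,
      k ≤ 1 + (score A (y w) - score A (y ⟨w.val + 1, h⟩)) /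
          (score P (y ⟨w.val + 1, h⟩) - score P (y w))) :
    IsWinner (B k) (y w) := by
  have hscore : ∀ (k' : ℝ) (j : Fin c),
      score (B k') j = (k' - 1) * score P j + score A j := by
    intro k' j
    simp only [score, hB, Finset.sum_add_distrib, Finset.mul_sum]
  -- main claim: score of any enumerated candidate at k is at most that of y w
  have main : ∀ m : Fin r, score (B k) (y m) ≤ score (B k) (y w) := by
    intro m
    rcases lt_trichotomy m w with hmw | hmw | hmw
    · -- m < w
      have hw0 : 0 < w.val := lt_of_le_of_lt (Nat.zero_le _) hmw
      set w1 : Fin r := ⟨w.val - 1, by omega⟩ with hw1def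
      have hw1w : w1 < w := by simp [Fin.lt_def, hw1def]; omega
      obtain ⟨k1, hk1, hwin1⟩ := hy w1
      have hp2 : score P (y w1) < score P (y w) := hmono _ _ hw1w
      have h3 : score A (y w1) - score A (y w) ≤
          (k - 1) * (score P (y w) - score P (y w1)) := by
        have := hlow hw0
        rw [← hw1def] at this
        have h' : (score A (y w1) - score A (y w)) /
            (score P (y w) - score P (y w1)) ≤ k - 1 := by linarith
        calc score A (y w1) - score A (y w)
            = (score A (y w1) - score A (y w)) /
              (score P (y w) - score P (y w1)) *
              (score P (y w) - score P (y w1)) :=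
              (div_mul_cancel₀ _ (by linarith)).symm
          _ ≤ (k - 1) * (score P (y w) - score P (y w1)) :=
              mul_le_mul_of_nonneg_right h' (by linarith)
      have h1 : (k1 - 1) * score P (y m) + score A (y m) ≤
          (k1 - 1) * score P (y w1) + score A (y w1) := by
        have := hwin1 (y m); rw [hscore, hscore] at this; exact this
      have h2 : (k1 - 1) * score P (y w) + score A (y w) ≤
          (k1 - 1) * score P (y w1) + score A (y w1) := by
        have := hwin1 (y w); rw [hscore, hscore] at this; exact this
      have hp1 : score P (y m) ≤ score P (y w1) := by
        rcases eq_or_lt_of_le (show m ≤ w1 by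
          simp [Fin.le_def, hw1def]; omega) with h | h
        · rw [h]
        · exact le_of_lt (hmono _ _ h)
      rw [hscore, hscore]
      exact key_low _ _ _ _ _ _ _ _ h1 h2 h3 hp1 hp2
    · rw [hmw]
    · -- w < m
      have hwr : w.val + 1 < r := by
        have := m.isLt
        have : w.val < m.val := hmw
        omega
      set w1 : Fin r := ⟨w.val + 1, hwr⟩ with hw1def
      have hww1 : w < w1 := by simp [Fin.lt_def, hw1def]
      obtain ⟨k1, hk1, hwin1⟩ := hy w1
      have hp2 : score P (y w) < score P (y w1) := hmono _ _ hww1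
      have h3 : (k - 1) * (score P (y w1) - score P (y w)) ≤
          score A (y w) - score A (y w1) := by
        have := hhigh hwr
        rw [← hw1def] at this
        have h' : k - 1 ≤ (score A (y w) - score A (y w1)) /
            (score P (y w1) - score P (y w)) := by linarith
        calc (k - 1) * (score P (y w1) - score P (y w))
            ≤ (score A (y w) - score A (y w1)) /
              (score P (y w1) - score P (y w)) *
              (score P (y w1) - score P (y w)) :=
              mul_le_mul_of_nonneg_right h' (by linarith)
          _ = score A (y w) - score A (y w1) :=
              div_mul_cancel₀ _ (by linarith)
      have h1 : (k1 - 1) * score P (y m) + score A (y m) ≤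
          (k1 - 1) * score P (y w1) + score A (y w1) := by
        have := hwin1 (y m); rw [hscore, hscore] at this; exact this
      have h2 : (k1 - 1) * score P (y w) + score A (y w) ≤
          (k1 - 1) * score P (y w1) + score A (y w1) := by
        have := hwin1 (y w); rw [hscore, hscore] at this; exact this
      have hp1 : score P (y w1) ≤ score P (y m) := by
        rcases eq_or_lt_of_le (show w1 ≤ m by
          simp [Fin.le_def, hw1def]; omega) with h | h
        · rw [h]
        · exact le_of_lt (hmono _ _ h)
      rw [hscore, hscore]
      exact key_high _ _ _ _ _ _ _ _ h1 h2 h3 hp1 hp2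
  -- any candidate is dominated by some enumerated candidate at k
  intro j'
  obtain ⟨jm, _, hjm⟩ := Finset.exists_max_image Finset.univ (score (B k))
    ⟨j', Finset.mem_univ j'⟩
  have hwinjm : IsWinner (B k) jm := fun x => hjm x (Finset.mem_univ x)
  obtain ⟨m, hm⟩ := hsurj jm ⟨k, hk, hwinjm⟩
  calc score (B k) j' ≤ score (B k) jm := hwinjm j'
    _ = score (B k) (y m) := by rw [hm]
    _ ≤ score (B k) (y w) := main m
end

section
/- Let n ≥ 1, let A be an n×c approval matrix and B an n×c beta(k) matrix such that for all voters i and candidates j, A i j = 1 if and only if B i j ≠ 0. If 1 ≤ k < 1 + 1/n, then every beta(k) winner (candidate whose column sum in B is maximal) is an approval winner (candidate whose column sum in A is maximal). -/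
/-- if `A i j = 1 ↔ B i j ≠ 0` and `1 ≤ k < 1 + 1/n`, every beta(k) winner
is an approval winner. -/
theorem stmt_10 {n c : ℕ} (hn : 1 ≤ n) (k : ℝ) (hk : 1 ≤ k) (hk' : k < 1 + 1 / n)
    (A B : Fin n → Fin c → ℝ)
    (hA : IsApprovalMatrix A) (hB : IsBetaMatrix k B)
    (hAB : ∀ i j, A i j = 1 ↔ B i j ≠ 0) :
    ∀ w : Fin c, IsWinner B w → IsWinner A w := by
  intro w hw j'
  have hnpos : (0:ℝ) < n := by positivity
  -- pointwise: A ≤ B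
  have hABle : ∀ i j, A i j ≤ B i j := by
    intro i j
    rcases hA.1 i j with h0 | h1
    · have hB0 : B i j = 0 := by
        by_contra hne
        have := (hAB i j).mpr hne
        rw [h0] at this; norm_num at this
      rw [h0, hB0]
    · have hne : B i j ≠ 0 := (hAB i j).mp h1
      obtain ⟨j0, hj0, hother⟩ := hB i
      by_cases hjj : j = j0
      · rw [h1, hjj, hj0]; exact hk
      · rcases hother j hjj with h | h
        · exact absurd h hne
        · rw [h1, h]
  -- pointwise: B ≤ A + (k-1)
  have hBAle : ∀ i j, B i j ≤ A i j + (k - 1) := by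
    intro i j
    obtain ⟨j0, hj0, hother⟩ := hB i
    by_cases hjj : j = j0
    · subst hjj
      have hne : B i j ≠ 0 := by rw [hj0]; linarith
      have h1 := (hAB i j).mpr hne
      rw [hj0, h1]; linarith
    · rcases hother j hjj with h | h
      · rw [h]
        rcases hA.1 i j with h0 | h0 <;> rw [h0] <;> linarith
      · have h1 := (hAB i j).mpr (by rw [h]; norm_num)
        rw [h, h1]; linarith
  -- score A is a natural number
  have hnat : ∀ j, score A j = ((Finset.univ.filter (fun i => A i j = 1)).card : ℝ) := by
    intro j
    rw [score, Finset.card_filter]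
    push_cast
    refine Finset.sum_congr rfl fun i _ => ?_
    rcases hA.1 i j with h0 | h1
    · simp [h0]
    · simp [h1]
  have h1 : score A j' ≤ score B j' := Finset.sum_le_sum fun i _ => hABle i j'
  have h2 : score B w ≤ score A w + n * (k - 1) := by
    calc score B w ≤ ∑ i, (A i w + (k - 1)) := Finset.sum_le_sum fun i _ => hBAle i w
    _ = score A w + n * (k - 1) := by
        rw [Finset.sum_add_distrib, Finset.sum_const, Finset.card_univ, Fintype.card_fin,
          nsmul_eq_mul]; rfl
  have h3 : (n:ℝ) * (k - 1) < 1 := by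
    have : k - 1 < 1 / n := by linarith
    calc (n:ℝ) * (k - 1) < n * (1 / n) := by
          exact mul_lt_mul_of_pos_left this hnpos
    _ = 1 := by field_simp
  have h4 : score A j' < score A w + 1 := by
    have := hw j'
    linarith
  rw [hnat j', hnat w] at h4 ⊢
  have : (Finset.univ.filter (fun i => A i j' = 1)).card ≤
      (Finset.univ.filter (fun i => A i w = 1)).card := by
    exact_mod_cast Nat.lt_succ_iff.mp (by exact_mod_cast (by push_cast at h4 ⊢; linarith : ((Finset.univ.filter (fun i => A i j' = 1)).card : ℝ) < ((Finset.univ.filter (fun i => A i w = 1)).card : ℝ) + 1))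
  exact_mod_cast this
end

section
/- Let n ≥ 1, let A be an n×c approval matrix and B an n×c beta(k) matrix such that for all voters i and candidates j, A i j = 1 if and only if B i j ≠ 0, and suppose 1 ≤ k < 1 + 1/n. If there is exactly one approval winner w (i.e., w is the unique candidate whose column sum in A is maximal), then a candidate is a beta(k) winner if and only if it equals w; that is, the set of beta(k) winners equals {w}. -/
/-!
Every beta(k) entry lies between the corresponding approval entry `a` and `a + (k - 1)`, so each
beta score exceeds the approval score by at most `n (k - 1) < 1`. Approval scores are integers,
so the unique approval winner leads every other candidate by at least `1`, and this lead survives.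
-/

open Finset

section Scores

variable {n c : ℕ}

lemma score_le_score {Z Z' : Fin n → Fin c → ℝ} {j : Fin c} (h : ∀ i, Z i j ≤ Z' i j) :
    score Z j ≤ score Z' j :=
  sum_le_sum fun i _ => h i

lemma score_le_score_add {Z Z' : Fin n → Fin c → ℝ} {j : Fin c} {ε : ℝ}
    (h : ∀ i, Z' i j ≤ Z i j + ε) : score Z' j ≤ score Z j + n * ε := by
  simpa [score, sum_add_distrib] using sum_le_sum fun i (_ : i ∈ univ) => h i

lemma score_eq_card_of_zero_one {A : Fin n → Fin c → ℝ} (hA : ∀ i j, A i j = 0 ∨ A i j = 1)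
    (j : Fin c) : score A j = #{i | A i j = 1} := by
  rw [score, card_filter]
  push_cast
  refine sum_congr rfl fun i _ => ?_
  rcases hA i j with h | h <;> simp [h]

lemma score_add_one_le_of_zero_one {A : Fin n → Fin c → ℝ} (hA : ∀ i j, A i j = 0 ∨ A i j = 1)
    {j j' : Fin c} (h : score A j < score A j') : score A j + 1 ≤ score A j' := by
  simp only [score_eq_card_of_zero_one hA] at h ⊢
  exact_mod_cast Nat.add_one_le_of_lt (by exact_mod_cast h)

lemma score_lt_of_isWinner_unique {Z : Fin n → Fin c → ℝ} {w : Fin c} (hw : IsWinner Z w)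
    (huniq : ∀ j, IsWinner Z j → j = w) {j : Fin c} (hj : j ≠ w) : score Z j < score Z w := by
  by_contra! h
  exact hj (huniq j fun j' => (hw j').trans h)

lemma isWinner_iff_eq_of_score_lt {Z : Fin n → Fin c → ℝ} {w : Fin c}
    (h : ∀ j, j ≠ w → score Z j < score Z w) (j : Fin c) : IsWinner Z j ↔ j = w := by
  constructor
  · intro hj
    by_contra hne
    exact (h j hne).not_ge (hj w)
  · rintro rfl j'
    rcases eq_or_ne j' j with rfl | hne
    · exact le_rfl
    · exact (h j' hne).le

end Scores

lemma IsBetaMatrix.eq_zero_or_eq_one_or_eq {n c : ℕ} {k : ℝ} {B : Fin n → Fin c → ℝ} (hB : IsBetaMatrix k B)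
    (i : Fin n) (j : Fin c) : B i j = 0 ∨ B i j = 1 ∨ B i j = k := by
  obtain ⟨d, hd, hother⟩ := hB i
  rcases eq_or_ne j d with rfl | hne
  · exact .inr (.inr hd)
  · exact (hother j hne).imp_right .inl

lemma IsBetaMatrix.entry_bounds {n c : ℕ} {k : ℝ} (hk : 1 ≤ k) {A B : Fin n → Fin c → ℝ}
    (hA : ∀ i j, A i j = 0 ∨ A i j = 1) (hB : IsBetaMatrix k B)
    (hAB : ∀ i j, A i j = 1 ↔ B i j ≠ 0) (i : Fin n) (j : Fin c) :
    A i j ≤ B i j ∧ B i j ≤ A i j + (k - 1) := by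
  rcases hB.eq_zero_or_eq_one_or_eq i j with h | h | h
  · have hA0 : A i j = 0 := (hA i j).resolve_right fun h1 => (hAB i j).mp h1 h
    constructor <;> linarith
  all_goals
    have hA1 : A i j = 1 := (hAB i j).mpr (by rw [h]; linarith)
    constructor <;> linarith

lemma natCast_mul_sub_one_lt_one {n : ℕ} {k : ℝ} (hk : k < 1 + 1 / n) : (n : ℝ) * (k - 1) < 1 := by
  rcases n.eq_zero_or_pos with rfl | hn
  · simp
  · have hn' : (0 : ℝ) < n := by exact_mod_cast hn
    calc (n : ℝ) * (k - 1) < n * (1 / n) := by gcongr; linarith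
      _ = 1 := by field_simp

theorem stmt_11_general {n c : ℕ} (k : ℝ) (hk : 1 ≤ k) (hk' : k < 1 + 1 / n)
    (A B : Fin n → Fin c → ℝ)
    (hA : IsApprovalMatrix A) (hB : IsBetaMatrix k B)
    (hAB : ∀ i j, A i j = 1 ↔ B i j ≠ 0)
    (w : Fin c) (hw : IsWinner A w) (huniq : ∀ j, IsWinner A j → j = w) :
    ∀ j : Fin c, IsWinner B j ↔ j = w := by
  have hbounds := hB.entry_bounds hk hA.1 hAB
  refine isWinner_iff_eq_of_score_lt fun j hj => ?_
  calc score B j ≤ score A j + n * (k - 1) := score_le_score_add fun i => (hbounds i j).2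
    _ < score A j + 1 := by linarith [natCast_mul_sub_one_lt_one hk']
    _ ≤ score A w := score_add_one_le_of_zero_one hA.1 (score_lt_of_isWinner_unique hw huniq hj)
    _ ≤ score B w := score_le_score fun i => (hbounds i w).1

/-- if `A i j = 1 ↔ B i j ≠ 0`, `1 ≤ k < 1 + 1/n`, and there is a unique
approval winner `w`, then the beta(k) winners are exactly `{w}`. -/
theorem stmt_11 {n c : ℕ} (hn : 1 ≤ n) (k : ℝ) (hk : 1 ≤ k) (hk' : k < 1 + 1 / n)
    (A B : Fin n → Fin c → ℝ)
    (hA : IsApprovalMatrix A) (hB : IsBetaMatrix k B)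
    (hAB : ∀ i j, A i j = 1 ↔ B i j ≠ 0)
    (w : Fin c) (hw : IsWinner A w) (huniq : ∀ j, IsWinner A j → j = w) :
    ∀ j : Fin c, IsWinner B j ↔ j = w :=
  stmt_11_general k hk hk' A B hA hB hAB w hw huniq
end

section
/- There exist n ≥ 1, c ≥ 1, a real number k with 1 ≤ k < 1 + 1/n, an n×c approval matrix A, and an n×c beta(k) matrix B with A i j = 1 if and only if B i j ≠ 0 for all i, j, such that some approval winner is not a beta(k) winner. (For instance n = c = 2 with B = [[k,1],[k,1]] for any k with 1 < k < 3/2, and A the all-ones matrix.) -/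
/-- there exist `n ≥ 1`, `c ≥ 1`, `k` with `1 ≤ k < 1 + 1/n`, an approval
matrix `A` and a beta(k) matrix `B` with `A i j = 1 ↔ B i j ≠ 0`, such that some approval
winner is not a beta(k) winner. -/
theorem stmt_12 :
    ∃ (n c : ℕ), 1 ≤ n ∧ 1 ≤ c ∧ ∃ (k : ℝ), 1 ≤ k ∧ k < 1 + 1 / n ∧
      ∃ (A B : Fin n → Fin c → ℝ),
        IsApprovalMatrix A ∧ IsBetaMatrix k B ∧
        (∀ i j, A i j = 1 ↔ B i j ≠ 0) ∧
        ∃ w : Fin c, IsWinner A w ∧ ¬ IsWinner B w := by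
  refine ⟨2, 2, by norm_num, by norm_num, (5/4 : ℝ), by norm_num, by norm_num,
    (fun _ _ => 1), (fun _ j => if j = 0 then 5/4 else 1), ⟨fun i j => Or.inr rfl,
      fun i => ⟨0, rfl⟩⟩, fun i => ⟨0, by simp, fun j' hj' => by simp [hj']⟩,
    fun i j => by simp only []; split <;> norm_num, 1, fun j' => le_refl _, ?_⟩
  intro h
  have := h 0
  simp [score, Fin.sum_univ_two] at this
  norm_num at this
end

section
/- Beta(k) is Pareto efficient for k > c − 1: let n ≥ 1, c ≥ 1, k ≥ 1 with k > c − 1, and let B be an n×c beta(k) matrix. If candidate w is a beta(k) winner (maximal column sum of B), then w receives at least one k-vote, i.e., there exists a voter i with B i w = k; hence at least one voter ranks w strictly above every other candidate. -/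
/-- beta(k) is Pareto efficient for `k > c - 1`: any beta(k) winner
receives at least one k-vote. -/
theorem stmt_17 {n c : ℕ} (hn : 1 ≤ n) (hc : 1 ≤ c)
    (k : ℝ) (hk : 1 ≤ k) (hkc : (c : ℝ) - 1 < k)
    (B : Fin n → Fin c → ℝ) (hB : IsBetaMatrix k B)
    (w : Fin c) (hw : IsWinner B w) :
    ∃ i : Fin n, B i w = k := by
  by_contra h
  push_neg at h
  -- Each row's entry at w is at most 1
  have hw1 : ∀ i, B i w ≤ 1 := by
    intro i
    obtain ⟨j, hj, ho⟩ := hB i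
    have hne : w ≠ j := fun e => h i (e ▸ hj)
    rcases ho w hne with h0 | h1 <;> linarith
  have hscorew : score B w ≤ n := by
    calc score B w ≤ ∑ _i : Fin n, (1 : ℝ) :=
          Finset.sum_le_sum fun i _ => hw1 i
      _ = n := by simp
  -- Sum of other columns is at least n * k
  have hrow : ∀ i : Fin n, k ≤ ∑ j' ∈ Finset.univ.erase w, B i j' := by
    intro i
    obtain ⟨j, hj, ho⟩ := hB i
    have hjmem : j ∈ Finset.univ.erase w := by
      simp only [Finset.mem_erase, Finset.mem_univ, and_true]
      exact fun e => h i (e ▸ hj)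
    have := Finset.single_le_sum (f := fun j' => B i j') (fun x _ => by
      by_cases hx : x = j
      · simp only [hx, hj]; linarith
      · rcases ho x hx with h0 | h1 <;> linarith) hjmem
    simp only [hj] at this; exact this
  have htot : (n : ℝ) * k ≤ ∑ j' ∈ Finset.univ.erase w, score B j' := by
    have : ∑ j' ∈ Finset.univ.erase w, score B j'
        = ∑ i : Fin n, ∑ j' ∈ Finset.univ.erase w, B i j' := by
      rw [Finset.sum_comm]; rfl
    rw [this]
    calc (n : ℝ) * k = ∑ _i : Fin n, k := by simp [mul_comm]
      _ ≤ _ := Finset.sum_le_sum fun i _ => hrow i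
  have hupper : ∑ j' ∈ Finset.univ.erase w, score B j' ≤ ((c : ℝ) - 1) * n := by
    calc ∑ j' ∈ Finset.univ.erase w, score B j'
        ≤ ∑ _j' ∈ Finset.univ.erase w, score B w :=
          Finset.sum_le_sum fun j' _ => hw j'
      _ = ((c : ℝ) - 1) * score B w := by
          rw [Finset.sum_const, Finset.card_erase_of_mem (Finset.mem_univ w)]
          simp [Nat.cast_sub hc]
      _ ≤ ((c : ℝ) - 1) * n := by
          apply mul_le_mul_of_nonneg_left hscorew
          have : (1 : ℝ) ≤ c := by exact_mod_cast hc
          linarith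
  have hn' : (1 : ℝ) ≤ n := by exact_mod_cast hn
  nlinarith [htot.trans hupper]
end
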